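/- arXiv:alg-geom/9608024 — 5 statements merged into one kernel-verified Lean document; each statement's English description precedes it below -/
import Mathlib

section
/- Let ℓ ≥ 1 and m = 2ℓ+1. Let ν₀ = x^m + c_{m−2}x^{m−2} + c_{m−4}x^{m−4} + ⋯ + c₁x ∈ ℂ[x] be an odd monic polynomial of degree m (only odd powers of x occur) such that ν₀ + 1 = g₁²·h₁ and ν₀ − 1 = g₂²·h₂, where for i = 1,2 the polynomial g_i is monic of degree ℓ, h_i is monic of degree 1, and g_i·h_i is squarefree. Then there exist complex numbers λ₁, …, λ_ℓ and μ such that, identically in the two complex variables x and t, (x^m + c_{m−2}·t·x^{m−2} + c_{m−4}·t²·x^{m−4} + ⋯ + c₁·t^ℓ·x)² − t^m = ∏_{i=1}^{ℓ}(x² − λᵢ·t)² · (x² − μ·t). -/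
open Polynomial

/-- Odd case (`m = 2ℓ+1`): for the special odd monic polynomial
`ν₀ = xᵐ + c_{m−2}x^{m−2} + ⋯ + c₁x`, there are constants `λ₁, …, λ_ℓ, μ` with
`(xᵐ + c_{m−2} t x^{m−2} + ⋯ + c₁ tˡ x)² − tᵐ = ∏ᵢ (x² − λᵢ t)² · (x² − μ t)`
for all complex `x, t`. -/
theorem stmt13 (ℓ : ℕ) (hℓ : 1 ≤ ℓ) (ν₀ : ℂ[X])
    (hmonic : ν₀.Monic) (hdeg : ν₀.natDegree = 2 * ℓ + 1)
    (hodd : ∀ j, Even j → ν₀.coeff j = 0)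
    (h1 : ∃ g h : ℂ[X], g.Monic ∧ g.natDegree = ℓ ∧ h.Monic ∧ h.natDegree = 1 ∧
      Squarefree (g * h) ∧ ν₀ + 1 = g ^ 2 * h)
    (h2 : ∃ g h : ℂ[X], g.Monic ∧ g.natDegree = ℓ ∧ h.Monic ∧ h.natDegree = 1 ∧
      Squarefree (g * h) ∧ ν₀ - 1 = g ^ 2 * h) :
    ∃ (lam : ℕ → ℂ) (mu : ℂ), ∀ x t : ℂ,
      (x ^ (2 * ℓ + 1) + ∑ i ∈ Finset.Icc 1 ℓ,
          ν₀.coeff (2 * ℓ + 1 - 2 * i) * t ^ i * x ^ (2 * ℓ + 1 - 2 * i)) ^ 2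
          - t ^ (2 * ℓ + 1)
        = (∏ i ∈ Finset.Icc 1 ℓ, (x ^ 2 - lam i * t) ^ 2) * (x ^ 2 - mu * t) := by
  clear h2
  obtain ⟨g, h, hgm, hgd, hhm, hhd, -, hfac⟩ := h1
  -- the root of h
  have hh : h = X + C (h.coeff 0) := hhm.eq_X_add_C hhd
  set β : ℂ := -h.coeff 0 with hβ
  have hhe : ∀ y : ℂ, h.eval y = y - β := by
    intro y
    conv_lhs => rw [hh]
    simp [hβ]
  -- roots of g
  have hsplit : Splits g := IsAlgClosed.splits g
  have hcard : Multiset.card g.roots = ℓ := by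
    rw [splits_iff_card_roots.mp hsplit, hgd]
  set L : List ℂ := g.roots.toList with hLdef
  have hL : L.length = ℓ := by rw [hLdef, Multiset.length_toList, hcard]
  set r : ℕ → ℂ := fun i => L.getD i 0 with hr
  have hge : ∀ y : ℂ, g.eval y = ∏ i ∈ Finset.range ℓ, (y - r i) := by
    intro y
    conv_lhs => rw [hsplit.eq_prod_roots_of_monic hgm]
    rw [eval_multiset_prod, Multiset.map_map]
    have hroots : g.roots = (L : Multiset ℂ) := (Multiset.coe_toList _).symm
    rw [hroots, Multiset.map_coe, Multiset.prod_coe]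
    conv_lhs => rw [← List.ofFn_get L]
    rw [List.map_ofFn, List.prod_ofFn]
    have : ∀ i : Fin L.length,
        ((eval y ∘ fun a => X - C a) ∘ L.get) i = y - r ↑i := by
      intro i
      simp [hr, List.getD_eq_get _ _ i]
    rw [Fintype.prod_congr _ _ this, Fin.prod_univ_eq_prod_range (fun i => y - r i), hL]
  -- pointwise factorizations
  have heval1 : ∀ y : ℂ, ν₀.eval y + 1 = (g.eval y) ^ 2 * h.eval y := by
    intro y
    have := congrArg (eval y) hfac
    simpa using this
  have hneg : ∀ y : ℂ, ν₀.eval (-y) = -ν₀.eval y := by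
    intro y
    rw [eval_eq_sum_range (-y), eval_eq_sum_range y, ← Finset.sum_neg_distrib]
    refine Finset.sum_congr rfl fun j _ => ?_
    rcases Nat.even_or_odd j with he | ho
    · rw [hodd j he]; ring
    · rw [ho.neg_pow]; ring
  -- key factorization of ν₀² - 1
  have hB : ∀ y : ℂ, ν₀.eval y ^ 2 - 1 =
      (∏ i ∈ Finset.range ℓ, (y ^ 2 - (r i) ^ 2) ^ 2) * (y ^ 2 - β ^ 2) := by
    intro y
    have e1 := heval1 y
    have e2 : ν₀.eval y - 1 = (g.eval (-y)) ^ 2 * (-(h.eval (-y))) := by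
      have := heval1 (-y)
      rw [hneg y] at this
      linear_combination -this
    have key : (∏ i ∈ Finset.range ℓ, ((y - r i) * (-y - r i)))
        = ∏ i ∈ Finset.range ℓ, (-1 : ℂ) * (y ^ 2 - (r i) ^ 2) :=
      Finset.prod_congr rfl fun i _ => by ring
    calc ν₀.eval y ^ 2 - 1 = (ν₀.eval y + 1) * (ν₀.eval y - 1) := by ring
      _ = ((g.eval y) * (g.eval (-y))) ^ 2 * (h.eval y * -(h.eval (-y))) := by
          rw [e1, e2]; ring
      _ = (∏ i ∈ Finset.range ℓ, ((y - r i) * (-y - r i))) ^ 2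
            * ((y - β) * -((-y) - β)) := by
          rw [hge, hge, hhe, hhe, ← Finset.prod_mul_distrib]
      _ = _ := by
          rw [key, Finset.prod_mul_distrib, Finset.prod_const, Finset.card_range,
            mul_pow, ← Finset.prod_pow]
          have h1 : (((-1 : ℂ)) ^ ℓ) ^ 2 = 1 := by
            rw [← pow_mul, mul_comm, pow_mul]
            norm_num
          rw [h1, one_mul]
          ring
  -- the sum identity (homogenization)
  have hA : ∀ x s : ℂ, s ≠ 0 →
      s ^ (2 * ℓ + 1) * ν₀.eval (x / s)
        = x ^ (2 * ℓ + 1) + ∑ i ∈ Finset.Icc 1 ℓ,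
            ν₀.coeff (2 * ℓ + 1 - 2 * i) * (s ^ 2) ^ i * x ^ (2 * ℓ + 1 - 2 * i) := by
    intro x s hs
    rw [eval_eq_sum_range, hdeg, Finset.mul_sum]
    have step : ∀ j ∈ Finset.range (2 * ℓ + 1 + 1),
        s ^ (2 * ℓ + 1) * (ν₀.coeff j * (x / s) ^ j)
          = ν₀.coeff j * s ^ (2 * ℓ + 1 - j) * x ^ j := by
      intro j hj
      have hj' : j ≤ 2 * ℓ + 1 := by
        have := Finset.mem_range.mp hj; omega
      have hpow : s ^ (2 * ℓ + 1 - j) = s ^ (2 * ℓ + 1) / s ^ j := pow_sub₀ s hs hj'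
      rw [hpow, div_pow]
      field_simp
    rw [Finset.sum_congr rfl step]
    set T : Finset ℕ := (Finset.range (ℓ + 1)).image (fun i => 2 * ℓ + 1 - 2 * i) with hT
    have hTsub : T ⊆ Finset.range (2 * ℓ + 1 + 1) := by
      intro j hj
      simp only [hT, Finset.mem_image, Finset.mem_range] at hj ⊢
      omega
    have hzero : ∀ j ∈ Finset.range (2 * ℓ + 1 + 1), j ∉ T →
        ν₀.coeff j * s ^ (2 * ℓ + 1 - j) * x ^ j = 0 := by
      intro j hj hjT
      rcases Nat.even_or_odd j with he | ho
      · rw [hodd j he]; ring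
      · exfalso
        apply hjT
        simp only [hT, Finset.mem_image, Finset.mem_range]
        have hj' := Finset.mem_range.mp hj
        obtain ⟨k, hk⟩ := ho
        exact ⟨(2 * ℓ + 1 - j) / 2, by omega, by omega⟩
    rw [← Finset.sum_subset hTsub hzero, hT,
      Finset.sum_image (by intro a ha b hb hab; simp only [Finset.mem_coe, Finset.mem_range] at ha hb hab; omega)]
    have hins : Finset.range (ℓ + 1) = insert 0 (Finset.Icc 1 ℓ) := by
      ext j
      simp only [Finset.mem_range, Finset.mem_insert, Finset.mem_Icc]
      omega
    rw [hins, Finset.sum_insert (by simp)]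
    have hc : ν₀.coeff (2 * ℓ + 1) = 1 := by
      rw [← hdeg]; exact hmonic.coeff_natDegree
    congr 1
    · norm_num [hc]
    · refine Finset.sum_congr rfl fun i hi => ?_
      have hi' := Finset.mem_Icc.mp hi
      have h2i : 2 * ℓ + 1 - (2 * ℓ + 1 - 2 * i) = 2 * i := by omega
      rw [h2i, pow_mul]
  -- construct the constants
  refine ⟨fun i => (r (i - 1)) ^ 2, β ^ 2, fun x t => ?_⟩
  obtain ⟨s, hs⟩ := IsAlgClosed.exists_pow_nat_eq t (n := 2) (by norm_num)
  subst hs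
  rcases eq_or_ne s 0 with rfl | hs0
  · have hsum : ∑ i ∈ Finset.Icc 1 ℓ,
        ν₀.coeff (2 * ℓ + 1 - 2 * i) * ((0 : ℂ) ^ 2) ^ i * x ^ (2 * ℓ + 1 - 2 * i) = 0 := by
      refine Finset.sum_eq_zero fun i hi => ?_
      have hi1 : 1 ≤ i := (Finset.mem_Icc.mp hi).1
      rw [zero_pow two_ne_zero, zero_pow (by omega : i ≠ 0)]
      ring
    rw [hsum, add_zero, zero_pow two_ne_zero, zero_pow (by omega : 2 * ℓ + 1 ≠ 0)]
    have hprod : ∏ i ∈ Finset.Icc 1 ℓ, (x ^ 2 - (r (i - 1)) ^ 2 * 0) ^ 2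
        = ((x ^ 2) ^ 2) ^ ℓ := by
      rw [Finset.prod_congr rfl (fun i _ => by rw [mul_zero, sub_zero]),
        Finset.prod_const, Nat.card_Icc]
      norm_num
    rw [hprod, mul_zero, sub_zero, sub_zero, ← pow_mul, ← pow_mul, ← pow_mul, ← pow_add]
    congr 1
    omega
  · rw [← hA x s hs0]
    have hy2 : s ^ 2 * (x / s) ^ 2 = x ^ 2 := by
      field_simp
    have e : (s ^ (2 * ℓ + 1)) ^ 2 = (s ^ 2) ^ (2 * ℓ + 1) := by
      rw [← pow_mul, ← pow_mul, mul_comm]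
    have split : ((s : ℂ) ^ 2) ^ (2 * ℓ + 1)
        = (∏ _i ∈ Finset.range ℓ, ((s ^ 2) ^ 2)) * s ^ 2 := by
      conv_rhs => rw [Finset.prod_const, Finset.card_range, ← pow_mul, ← pow_succ]
    calc (s ^ (2 * ℓ + 1) * ν₀.eval (x / s)) ^ 2 - (s ^ 2) ^ (2 * ℓ + 1)
        = (s ^ 2) ^ (2 * ℓ + 1) * (ν₀.eval (x / s) ^ 2 - 1) := by rw [← e]; ring
      _ = ((∏ _i ∈ Finset.range ℓ, ((s ^ 2) ^ 2)) * s ^ 2) *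
            ((∏ i ∈ Finset.range ℓ, ((x / s) ^ 2 - (r i) ^ 2) ^ 2)
              * ((x / s) ^ 2 - β ^ 2)) := by rw [split, hB]
      _ = (∏ i ∈ Finset.range ℓ, (s ^ 2 * ((x / s) ^ 2 - (r i) ^ 2)) ^ 2)
            * (s ^ 2 * ((x / s) ^ 2 - β ^ 2)) := by
          rw [Finset.prod_congr rfl (fun i _ => (mul_pow _ _ 2 : _)),
            Finset.prod_mul_distrib]
          ring
      _ = (∏ i ∈ Finset.range ℓ, (x ^ 2 - (r i) ^ 2 * s ^ 2) ^ 2)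
            * (x ^ 2 - β ^ 2 * s ^ 2) := by
          have hfact : ∀ c : ℂ, s ^ 2 * ((x / s) ^ 2 - c) = x ^ 2 - c * s ^ 2 := by
            intro c; rw [mul_sub, hy2]; ring
          rw [Finset.prod_congr rfl fun i _ => by rw [hfact], hfact]
      _ = (∏ i ∈ Finset.Icc 1 ℓ, (x ^ 2 - (r (i - 1)) ^ 2 * s ^ 2) ^ 2)
            * (x ^ 2 - β ^ 2 * s ^ 2) := by
          congr 1
          refine Finset.prod_nbij' (fun i => i + 1) (fun j => j - 1) ?_ ?_ ?_ ?_ ?_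
          · intro a ha
            simp only [Finset.mem_range] at ha
            simp only [Finset.mem_Icc]
            omega
          · intro a ha
            simp only [Finset.mem_Icc] at ha
            simp only [Finset.mem_range]
            omega
          · intro a _
            show a + 1 - 1 = a
            omega
          · intro a ha
            simp only [Finset.mem_Icc] at ha
            show a - 1 + 1 = a
            omega
          · intro a _
            simp
end

section
/- For every integer n ≥ 1, the following binomial identity holds: C(2n, n−1) + Σ_{j=0}^{n−2} 4·(n−1−j)·C(2n, j) = Σ_{k=0}^{n−1} (n−k)·C(2n+2, k). -/
open Finset

private def g (N n : ℕ) : ℕ := ∑ k ∈ range n, (n - k) * Nat.choose N k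

private lemma gstep (N n : ℕ) :
    g N (n + 1) = g N n + ∑ k ∈ range (n + 1), Nat.choose N k := by
  unfold g
  have h : ∀ k ∈ range (n + 1), (n + 1 - k) * Nat.choose N k
      = (n - k) * Nat.choose N k + Nat.choose N k := by
    intro k hk
    have hk' : k ≤ n := Nat.lt_succ_iff.mp (mem_range.mp hk)
    have : n + 1 - k = (n - k) + 1 := by omega
    rw [this, add_mul, one_mul]
  rw [Finset.sum_congr rfl h, Finset.sum_add_distrib,
      Finset.sum_range_succ (fun k => (n - k) * Nat.choose N k), Nat.sub_self,
      zero_mul, add_zero]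

private lemma gpascal (N n : ℕ) :
    g (N + 1) (n + 1) = g N (n + 1) + g N n := by
  unfold g
  rw [Finset.sum_range_succ' (fun k => (n + 1 - k) * Nat.choose (N + 1) k),
      Finset.sum_range_succ' (fun k => (n + 1 - k) * Nat.choose N k)]
  simp only [Nat.succ_sub_succ, Nat.choose_succ_succ, Nat.choose_zero_right,
    Nat.sub_zero, mul_one, mul_add, Finset.sum_add_distrib]
  ring

/-- Binomial identity:
`C(2n, n−1) + Σ_{j=0}^{n−2} 4(n−1−j) C(2n, j) = Σ_{k=0}^{n−1} (n−k) C(2n+2, k)`. -/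
theorem stmt14 (n : ℕ) (hn : 1 ≤ n) :
    Nat.choose (2 * n) (n - 1)
      + ∑ j ∈ Finset.range (n - 1), 4 * (n - 1 - j) * Nat.choose (2 * n) j
    = ∑ k ∈ Finset.range n, (n - k) * Nat.choose (2 * n + 2) k := by
  obtain ⟨m, rfl⟩ : ∃ m, n = m + 1 := ⟨n - 1, by omega⟩
  simp only [Nat.add_sub_cancel]
  have hL : ∑ j ∈ range m, 4 * (m - j) * Nat.choose (2 * (m + 1)) j
      = 4 * g (2 * (m + 1)) m := by
    unfold g
    rw [Finset.mul_sum]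
    exact Finset.sum_congr rfl fun j _ => by ring
  have hR : ∑ k ∈ range (m + 1), (m + 1 - k) * Nat.choose (2 * (m + 1) + 2) k
      = g (2 * (m + 1) + 2) (m + 1) := rfl
  rw [hL, hR]
  rcases m with _ | p
  · decide
  · set N := 2 * (p + 1 + 1) with hN
    have h1 : g (N + 2) (p + 1 + 1) = g (N + 1) (p + 2) + g (N + 1) (p + 1) :=
      gpascal (N + 1) (p + 1)
    have h2 : g (N + 1) (p + 2) = g N (p + 2) + g N (p + 1) := gpascal N (p + 1)
    have h3 : g (N + 1) (p + 1) = g N (p + 1) + g N p := gpascal N p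
    have h4 : g N (p + 1) = g N p + ∑ k ∈ range (p + 1), Nat.choose N k := gstep N p
    have h5 : g N (p + 2) = g N (p + 1) + ∑ k ∈ range (p + 2), Nat.choose N k :=
      gstep N (p + 1)
    have hQ : ∑ k ∈ range (p + 2), Nat.choose N k
        = (∑ k ∈ range (p + 1), Nat.choose N k) + Nat.choose N (p + 1) :=
      Finset.sum_range_succ _ _
    omega
end

section
/- For every integer n ≥ 1, the following binomial identity holds: Σ_{k=0}^{n−1} (n−k)²·C(2n+2, k) = Σ_{k=0}^{n−1} C(n−k+1, 2)·C(2n+3, k). -/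
lemma sq_eq_choose (m : ℕ) : m ^ 2 = (m + 1).choose 2 + m.choose 2 := by
  induction m with
  | zero => decide
  | succ k ih =>
    have h1 : (k + 2).choose 2 = (k + 1).choose 1 + (k + 1).choose 2 :=
      Nat.choose_succ_succ _ _
    have h2 : (k + 1).choose 2 = k.choose 1 + k.choose 2 := Nat.choose_succ_succ _ _
    have h3 : (k + 1) ^ 2 = k ^ 2 + 2 * k + 1 := by ring
    have h0 : (k + 1 + 1).choose 2 = (k + 2).choose 2 := rfl
    simp [Nat.choose_one_right] at h1 h2
    omega

/-- Binomial identity: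
`Σ_{k=0}^{n−1} (n−k)² C(2n+2, k) = Σ_{k=0}^{n−1} C(n−k+1, 2) C(2n+3, k)`. -/
theorem stmt15 (n : ℕ) (hn : 1 ≤ n) :
    ∑ k ∈ Finset.range n, (n - k) ^ 2 * Nat.choose (2 * n + 2) k
    = ∑ k ∈ Finset.range n, Nat.choose (n - k + 1) 2 * Nat.choose (2 * n + 3) k := by
  obtain ⟨m, rfl⟩ : ∃ m, n = m + 1 := ⟨n - 1, by omega⟩
  set N := 2 * (m + 1) + 2 with hN
  have hLHS :
      ∑ k ∈ Finset.range (m + 1), (m + 1 - k) ^ 2 * N.choose k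
        = (m + 2).choose 2
          + ((∑ k ∈ Finset.range m, (m - k + 1).choose 2 * N.choose (k + 1))
            + ∑ k ∈ Finset.range m, (m - k + 1).choose 2 * N.choose k) := by
    have step1 : ∀ k ∈ Finset.range (m + 1),
        (m + 1 - k) ^ 2 * N.choose k
          = (m + 1 - k + 1).choose 2 * N.choose k + (m + 1 - k).choose 2 * N.choose k := by
      intro k _
      rw [sq_eq_choose (m + 1 - k), Nat.add_mul]
    rw [Finset.sum_congr rfl step1, Finset.sum_add_distrib]
    have hA : ∑ k ∈ Finset.range (m + 1), (m + 1 - k + 1).choose 2 * N.choose k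
        = (∑ k ∈ Finset.range m, (m - k + 1).choose 2 * N.choose (k + 1))
          + (m + 2).choose 2 := by
      rw [Finset.sum_range_succ' (fun k => (m + 1 - k + 1).choose 2 * N.choose k) m]
      simp only [Nat.sub_zero, Nat.choose_zero_right, mul_one]
      congr 1
      apply Finset.sum_congr rfl
      intro k hk
      congr 2
      omega
    have hB : ∑ k ∈ Finset.range (m + 1), (m + 1 - k).choose 2 * N.choose k
        = ∑ k ∈ Finset.range m, (m - k + 1).choose 2 * N.choose k := by
      rw [Finset.sum_range_succ]
      have hz : (m + 1 - m).choose 2 = 0 := by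
        have h1 : m + 1 - m = 1 := by omega
        rw [h1]; decide
      rw [hz, zero_mul, add_zero]
      apply Finset.sum_congr rfl
      intro k hk
      simp only [Finset.mem_range] at hk
      congr 2
      omega
    rw [hA, hB]
    ring
  have hRHS :
      ∑ k ∈ Finset.range (m + 1), (m + 1 - k + 1).choose 2 * (N + 1).choose k
        = (m + 2).choose 2
          + ((∑ k ∈ Finset.range m, (m - k + 1).choose 2 * N.choose (k + 1))
            + ∑ k ∈ Finset.range m, (m - k + 1).choose 2 * N.choose k) := by
    rw [Finset.sum_range_succ' (fun k => (m + 1 - k + 1).choose 2 * (N + 1).choose k) m]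
    simp only [Nat.sub_zero, Nat.choose_zero_right, mul_one]
    have : ∀ k ∈ Finset.range m,
        (m + 1 - (k + 1) + 1).choose 2 * (N + 1).choose (k + 1)
          = (m - k + 1).choose 2 * N.choose (k + 1) + (m - k + 1).choose 2 * N.choose k := by
      intro k hk
      have h1 : m + 1 - (k + 1) = m - k := by omega
      rw [h1, Nat.choose_succ_succ N k, Nat.mul_add]
      ring
    rw [Finset.sum_congr rfl this, Finset.sum_add_distrib]
    ring
  have hN3 : 2 * (m + 1) + 3 = N + 1 := by omega
  rw [hN3]
  rw [hLHS, hRHS]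
end

section
/- For every integer n ≥ 1, the following identity holds: n²·(C(2n, n) − C(2n, n−1)) + Σ_{k=1}^{n−1} 2·(n−k)·(2n−k)·C(2n, k−1) − Σ_{k=1}^{n−1} k·(n−k)·C(2n, k) − Σ_{k=2}^{n−1} k·(n−k)·C(2n, k−2) = Σ_{k=0}^{n−1} (n−k)²·C(2n+2, k). (The identity may be read in the integers ℤ.) -/
/-- Identity in ℤ:
`n²(C(2n,n) − C(2n,n−1)) + Σ_{k=1}^{n−1} 2(n−k)(2n−k) C(2n,k−1)
 − Σ_{k=1}^{n−1} k(n−k) C(2n,k) − Σ_{k=2}^{n−1} k(n−k) C(2n,k−2)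
 = Σ_{k=0}^{n−1} (n−k)² C(2n+2,k)`. -/
theorem stmt16 (n : ℕ) (hn : 1 ≤ n) :
    (n : ℤ) ^ 2 * ((Nat.choose (2 * n) n : ℤ) - (Nat.choose (2 * n) (n - 1) : ℤ))
      + ∑ k ∈ Finset.Icc 1 (n - 1),
          2 * ((n : ℤ) - (k : ℤ)) * (2 * (n : ℤ) - (k : ℤ)) * (Nat.choose (2 * n) (k - 1) : ℤ)
      - ∑ k ∈ Finset.Icc 1 (n - 1),
          (k : ℤ) * ((n : ℤ) - (k : ℤ)) * (Nat.choose (2 * n) k : ℤ)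
      - ∑ k ∈ Finset.Icc 2 (n - 1),
          (k : ℤ) * ((n : ℤ) - (k : ℤ)) * (Nat.choose (2 * n) (k - 2) : ℤ)
    = ∑ k ∈ Finset.range n, ((n : ℤ) - (k : ℤ)) ^ 2 * (Nat.choose (2 * n + 2) k : ℤ) := by
  rcases Nat.lt_or_ge n 3 with h | h
  · interval_cases n
    · norm_num [Finset.sum_range_succ]
    · norm_num [Finset.sum_range_succ, Finset.Icc_self, Nat.choose]
  · obtain ⟨m, rfl⟩ : ∃ m, n = m + 3 := ⟨n - 3, by omega⟩
    clear hn h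
    set c : ℕ → ℤ := fun i => ((2 * (m + 3)).choose i : ℤ) with hc
    have e0 : m + 3 - 1 = m + 2 := rfl
    rw [e0]
    rw [show Finset.Icc 1 (m+2) = Finset.Ico 1 (m+3) from (Finset.Ico_add_one_right_eq_Icc 1 (m+2)).symm,
        show Finset.Icc 2 (m+2) = Finset.Ico 2 (m+3) from (Finset.Ico_add_one_right_eq_Icc 2 (m+2)).symm,
        Finset.sum_Ico_eq_sum_range, Finset.sum_Ico_eq_sum_range, Finset.sum_Ico_eq_sum_range]
    simp only [show m + 3 - 1 = m + 2 from rfl, show m + 3 - 2 = m + 1 from rfl,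
      Nat.add_sub_cancel_left]
    -- master sum versions of each LHS sum
    have h1 : ∑ k ∈ Finset.range (m+2),
        2 * ((↑(m+3) : ℤ) - ↑(1+k)) * (2 * (↑(m+3):ℤ) - ↑(1+k)) * c k
        = (∑ i ∈ Finset.range (m+4), (2 * ((m:ℤ)+2-i) * (2*(m:ℤ)+5-i)) * c i)
          + 2 * ((m:ℤ)+2) * c (m+3) := by
      conv_rhs => rw [Finset.sum_range_succ, Finset.sum_range_succ]
      have : ∑ k ∈ Finset.range (m+2),
          2 * ((↑(m+3) : ℤ) - ↑(1+k)) * (2 * (↑(m+3):ℤ) - ↑(1+k)) * c k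
          = ∑ i ∈ Finset.range (m+2), (2 * ((m:ℤ)+2-i) * (2*(m:ℤ)+5-i)) * c i :=
        Finset.sum_congr rfl (fun i _ => by push_cast; ring)
      rw [this]; push_cast; ring
    have h2 : ∑ k ∈ Finset.range (m+2),
        (↑(1+k) : ℤ) * ((↑(m+3):ℤ) - ↑(1+k)) * c (1+k)
        = ∑ i ∈ Finset.range (m+4), ((i:ℤ) * ((m:ℤ)+3-i)) * c i := by
      conv_rhs => rw [Finset.sum_range_succ, Finset.sum_range_succ']
      have : ∑ k ∈ Finset.range (m+2),
          (↑(1+k) : ℤ) * ((↑(m+3):ℤ) - ↑(1+k)) * c (1+k)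
          = ∑ k ∈ Finset.range (m+2), ((↑(k+1):ℤ) * ((m:ℤ)+3-(↑(k+1):ℤ))) * c (k+1) :=
        Finset.sum_congr rfl (fun i _ => by rw [Nat.add_comm 1 i]; push_cast; ring)
      rw [this]; push_cast; ring
    have h3 : ∑ k ∈ Finset.range (m+1),
        (↑(2+k) : ℤ) * ((↑(m+3):ℤ) - ↑(2+k)) * c k
        = (∑ i ∈ Finset.range (m+4), (((i:ℤ)+2) * ((m:ℤ)+1-i)) * c i)
          + ((m:ℤ)+4) * c (m+2) + 2*((m:ℤ)+5) * c (m+3) := by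
      conv_rhs => rw [Finset.sum_range_succ, Finset.sum_range_succ, Finset.sum_range_succ]
      have : ∑ k ∈ Finset.range (m+1),
          (↑(2+k) : ℤ) * ((↑(m+3):ℤ) - ↑(2+k)) * c k
          = ∑ i ∈ Finset.range (m+1), (((i:ℤ)+2) * ((m:ℤ)+1-i)) * c i :=
        Finset.sum_congr rfl (fun i _ => by push_cast; ring)
      rw [this]; push_cast; ring
    -- Pascal twice
    have hp : ∀ i : ℕ, ((2*(m+3)+2).choose (i+2) : ℤ) = c i + 2 * c (i+1) + c (i+2) := by
      intro i
      have a1 : (2*(m+3)+2).choose (i+2) = (2*(m+3)+1).choose (i+1) + (2*(m+3)+1).choose (i+2) :=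
        Nat.choose_succ_succ (2*(m+3)+1) (i+1)
      have a2 : (2*(m+3)+1).choose (i+1) = (2*(m+3)).choose i + (2*(m+3)).choose (i+1) :=
        Nat.choose_succ_succ (2*(m+3)) i
      have a3 : (2*(m+3)+1).choose (i+2) = (2*(m+3)).choose (i+1) + (2*(m+3)).choose (i+2) :=
        Nat.choose_succ_succ (2*(m+3)) (i+1)
      rw [a1, a2, a3, hc]; push_cast; ring
    have hd1 : ((2*(m+3)+2).choose 1 : ℤ) = c 1 + 2 * c 0 := by
      simp [hc, Nat.choose_one_right]
    have hd0 : ((2*(m+3)+2).choose 0 : ℤ) = c 0 := by simp [hc]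
    -- RHS
    have h4 : ∑ k ∈ Finset.range (m+3), ((↑(m+3):ℤ) - ↑k) ^ 2 * ((2*(m+3)+2).choose k : ℤ)
        = (∑ i ∈ Finset.range (m+4), (((m:ℤ)+1-i)^2 + 2*((m:ℤ)+2-i)^2 + ((m:ℤ)+3-i)^2) * c i)
          - c (m+2) - 6 * c (m+3) := by
      conv_lhs => rw [Finset.sum_range_succ', Finset.sum_range_succ']
      have key : ∑ k ∈ Finset.range (m+1),
          ((↑(m+3):ℤ) - ↑(k+1+1)) ^ 2 * ((2*(m+3)+2).choose (k+1+1) : ℤ)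
          = ∑ k ∈ Finset.range (m+1),
            (((m:ℤ)+1-k)^2 * c k + 2*((m:ℤ)+1-k)^2 * c (k+1) + ((m:ℤ)+1-k)^2 * c (k+2)) :=
        Finset.sum_congr rfl (fun i _ => by rw [hp i]; push_cast; ring)
      rw [key, Finset.sum_add_distrib, Finset.sum_add_distrib]
      have u0 : ∑ k ∈ Finset.range (m+1), ((m:ℤ)+1-k)^2 * c k
          = (∑ i ∈ Finset.range (m+4), ((m:ℤ)+1-i)^2 * c i) - c (m+2) - 4 * c (m+3) := by
        conv_rhs => rw [Finset.sum_range_succ, Finset.sum_range_succ, Finset.sum_range_succ]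
        push_cast; ring
      have u1 : ∑ k ∈ Finset.range (m+1), 2*((m:ℤ)+1-k)^2 * c (k+1)
          = (∑ i ∈ Finset.range (m+4), 2*((m:ℤ)+2-i)^2 * c i)
            - 2*((m:ℤ)+2)^2 * c 0 - 2 * c (m+3) := by
        conv_rhs => rw [Finset.sum_range_succ, Finset.sum_range_succ, Finset.sum_range_succ']
        have : ∑ k ∈ Finset.range (m+1), 2*((m:ℤ)+1-k)^2 * c (k+1)
            = ∑ k ∈ Finset.range (m+1), 2*((m:ℤ)+2-(↑(k+1):ℤ))^2 * c (k+1) :=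
          Finset.sum_congr rfl (fun i _ => by push_cast; ring)
        rw [this]; push_cast; ring
      have u2 : ∑ k ∈ Finset.range (m+1), ((m:ℤ)+1-k)^2 * c (k+2)
          = (∑ i ∈ Finset.range (m+4), ((m:ℤ)+3-i)^2 * c i)
            - ((m:ℤ)+3)^2 * c 0 - ((m:ℤ)+2)^2 * c 1 := by
        conv_rhs => rw [Finset.sum_range_succ, Finset.sum_range_succ', Finset.sum_range_succ']
        have : ∑ k ∈ Finset.range (m+1), ((m:ℤ)+1-k)^2 * c (k+2)
            = ∑ k ∈ Finset.range (m+1), ((m:ℤ)+3-(↑(k+1+1):ℤ))^2 * c (k+1+1) :=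
          Finset.sum_congr rfl (fun i _ => by push_cast; ring)
        rw [this]; push_cast; ring
      rw [u0, u1, u2]
      simp only [Nat.zero_add]
      rw [hd1, hd0]
      have comb : ∑ i ∈ Finset.range (m+4),
          (((m:ℤ)+1-i)^2 + 2*((m:ℤ)+2-i)^2 + ((m:ℤ)+3-i)^2) * c i
          = (∑ i ∈ Finset.range (m+4), ((m:ℤ)+1-i)^2 * c i)
            + (∑ i ∈ Finset.range (m+4), 2*((m:ℤ)+2-i)^2 * c i)
            + (∑ i ∈ Finset.range (m+4), ((m:ℤ)+3-i)^2 * c i) := by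
        rw [← Finset.sum_add_distrib, ← Finset.sum_add_distrib]
        exact Finset.sum_congr rfl (fun i _ => by ring)
      rw [comb]; push_cast; ring
    rw [h1, h2, h3, h4]
    have hsum : ∑ i ∈ Finset.range (m+4), (2 * ((m:ℤ)+2-i) * (2*(m:ℤ)+5-i)) * c i
        = (∑ i ∈ Finset.range (m+4), ((i:ℤ) * ((m:ℤ)+3-i)) * c i)
          + (∑ i ∈ Finset.range (m+4), (((i:ℤ)+2) * ((m:ℤ)+1-i)) * c i)
          + (∑ i ∈ Finset.range (m+4),
              (((m:ℤ)+1-i)^2 + 2*((m:ℤ)+2-i)^2 + ((m:ℤ)+3-i)^2) * c i) := by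
      rw [← Finset.sum_add_distrib, ← Finset.sum_add_distrib]
      exact Finset.sum_congr rfl (fun i _ => by ring)
    have hrel : ((m:ℤ)+3) * c (m+3) = ((m:ℤ)+4) * c (m+2) := by
      have h5 := Nat.choose_succ_right_eq (2*(m+3)) (m+2)
      rw [show 2*(m+3) - (m+2) = m+4 from by omega] at h5
      have h6 := congrArg (Nat.cast : ℕ → ℤ) h5
      push_cast at h6
      simp only [hc]
      linarith [h6]
    push_cast
    linear_combination hsum + ((m:ℤ)+3) * hrel
end

section
/- Let n ≥ 1 be an integer and let N be a rational number. Suppose that n·N + n³·C(2n, n−1) + Σ_{k=1}^{n−1} (n−k)·(k(n−k+1) + k(k−1))·C(2n, k) + Σ_{k=1}^{n−1} (n−k)·2(k−1)(n−k)·C(2n, k−1) + Σ_{k=2}^{n−1} (n−k)·((2n−k)² + (k−2)(n−k))·C(2n, k−2) = n³·C(2n, n) + Σ_{k=1}^{n−1} (n−k)·(2(2n−k)(n−k+1) + 2(2n−k)(k−1) + 2(k−1)(n−k))·C(2n, k−1) + Σ_{k=2}^{n−1} (n−k)·(2(2n−k)(n−k) + 2(k−2)(n−k) + 2(n−k))·C(2n,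 k−2). Then N = Σ_{k=0}^{n−1} (n−k)²·C(2n+2, k). (This is the combinatorial content of the closed formula N(2C) = Σ_{k=0}^{n−1} (n−k)²·C(2n+2, k) for the number of irreducible rational curves in the linear series |2C| on the Hirzebruch surface F_n through 2n+3 general points: the hypothesis is the equality of the number of zeroes and the number of poles of the cross-ratio function computed in the paper.) -/
lemma pas2 (t M : ℕ) (f : ℕ → ℚ) :
    ∑ k ∈ Finset.range (M + 2), f k * ((t + 2).choose k : ℚ)
      = ∑ k ∈ Finset.range (M + 2), f k * (t.choose k : ℚ)
        + 2 * ∑ k ∈ Finset.range (M + 1), f (k + 1) * (t.choose k : ℚ)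
        + ∑ k ∈ Finset.range M, f (k + 2) * (t.choose k : ℚ) := by
  induction M with
  | zero =>
      simp [Finset.sum_range_succ, Nat.choose_one_right]
      ring
  | succ M ih =>
      have e1 := Finset.sum_range_succ (fun k => f k * ((t + 2).choose k : ℚ)) (M + 2)
      have e2 := Finset.sum_range_succ (fun k => f k * (t.choose k : ℚ)) (M + 2)
      have e3 := Finset.sum_range_succ (fun k => f (k + 1) * (t.choose k : ℚ)) (M + 1)
      have e4 := Finset.sum_range_succ (fun k => f (k + 2) * (t.choose k : ℚ)) M
      have c1 : (t + 2).choose (M + 2)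
          = t.choose M + 2 * (t.choose (M + 1)) + t.choose (M + 2) := by
        rw [show t + 2 = t + 1 + 1 from rfl, show M + 2 = M + 1 + 1 from rfl,
          Nat.choose_succ_succ' (t + 1) (M + 1), Nat.choose_succ_succ' t M,
          Nat.choose_succ_succ' t (M + 1)]
        ring
      have c1q : ((t + 2).choose (M + 2) : ℚ)
          = (t.choose M : ℚ) + 2 * (t.choose (M + 1) : ℚ) + (t.choose (M + 2) : ℚ) := by
        exact_mod_cast congrArg (Nat.cast : ℕ → ℚ) c1
      linear_combination e1 - e2 - 2 * e3 - e4 + ih + f (M + 2) * c1q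



/-- If a rational number `N` satisfies the balance of zeroes and poles of the
cross-ratio function for the class `2C` on the Hirzebruch surface `F_n`, namely
`n·N + n³ C(2n,n−1) + Σ_{k=1}^{n−1}(n−k)(k(n−k+1)+k(k−1)) C(2n,k)
 + Σ_{k=1}^{n−1}(n−k)·2(k−1)(n−k) C(2n,k−1)
 + Σ_{k=2}^{n−1}(n−k)((2n−k)²+(k−2)(n−k)) C(2n,k−2)
 = n³ C(2n,n) + Σ_{k=1}^{n−1}(n−k)(2(2n−k)(n−k+1)+2(2n−k)(k−1)+2(k−1)(n−k)) C(2n,k−1)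
 + Σ_{k=2}^{n−1}(n−k)(2(2n−k)(n−k)+2(k−2)(n−k)+2(n−k)) C(2n,k−2)`,
then `N = Σ_{k=0}^{n−1} (n−k)² C(2n+2,k)`. -/
theorem stmt17 (n : ℕ) (hn : 1 ≤ n) (N : ℚ)
    (hbal :
      (n : ℚ) * N + (n : ℚ) ^ 3 * (Nat.choose (2 * n) (n - 1) : ℚ)
        + ∑ k ∈ Finset.Icc 1 (n - 1),
            ((n : ℚ) - (k : ℚ)) *
              ((k : ℚ) * ((n : ℚ) - (k : ℚ) + 1) + (k : ℚ) * ((k : ℚ) - 1)) *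
              (Nat.choose (2 * n) k : ℚ)
        + ∑ k ∈ Finset.Icc 1 (n - 1),
            ((n : ℚ) - (k : ℚ)) *
              (2 * ((k : ℚ) - 1) * ((n : ℚ) - (k : ℚ))) *
              (Nat.choose (2 * n) (k - 1) : ℚ)
        + ∑ k ∈ Finset.Icc 2 (n - 1),
            ((n : ℚ) - (k : ℚ)) *
              ((2 * (n : ℚ) - (k : ℚ)) ^ 2 + ((k : ℚ) - 2) * ((n : ℚ) - (k : ℚ))) *
              (Nat.choose (2 * n) (k - 2) : ℚ)
      = (n : ℚ) ^ 3 * (Nat.choose (2 * n) n : ℚ)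
        + ∑ k ∈ Finset.Icc 1 (n - 1),
            ((n : ℚ) - (k : ℚ)) *
              (2 * (2 * (n : ℚ) - (k : ℚ)) * ((n : ℚ) - (k : ℚ) + 1)
                + 2 * (2 * (n : ℚ) - (k : ℚ)) * ((k : ℚ) - 1)
                + 2 * ((k : ℚ) - 1) * ((n : ℚ) - (k : ℚ))) *
              (Nat.choose (2 * n) (k - 1) : ℚ)
        + ∑ k ∈ Finset.Icc 2 (n - 1),
            ((n : ℚ) - (k : ℚ)) *
              (2 * (2 * (n : ℚ) - (k : ℚ)) * ((n : ℚ) - (k : ℚ))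
                + 2 * ((k : ℚ) - 2) * ((n : ℚ) - (k : ℚ))
                + 2 * ((n : ℚ) - (k : ℚ))) *
              (Nat.choose (2 * n) (k - 2) : ℚ)) :
    N = ∑ k ∈ Finset.range n, ((n : ℚ) - (k : ℚ)) ^ 2 * (Nat.choose (2 * n + 2) k : ℚ) := by
  rcases Nat.lt_or_ge n 2 with h2 | h2
  · interval_cases n
    have e1 : Finset.Icc 1 (1 - 1) = (∅ : Finset ℕ) := rfl
    have e2 : Finset.Icc 2 (1 - 1) = (∅ : Finset ℕ) := rfl
    simp only [e1, e2, Finset.sum_empty, Finset.sum_range_one] at hbal ⊢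
    norm_num [Nat.choose] at hbal ⊢
    linarith
  · obtain ⟨m, rfl⟩ : ∃ m, n = m + 2 := ⟨n - 2, by omega⟩
    have hIcc1 : Finset.Icc 1 (m + 1) = Finset.Ico 1 (m + 2) := (Finset.Ico_add_one_right_eq_Icc 1 (m+1)).symm
    have hIcc2 : Finset.Icc 2 (m + 1) = Finset.Ico 2 (m + 2) := (Finset.Ico_add_one_right_eq_Icc 2 (m+1)).symm
    simp only [show m + 2 - 1 = m + 1 from rfl, show 2 * (m + 2) = 2 * m + 4 from by ring,
      hIcc1, hIcc2] at hbal ⊢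
    push_cast at hbal ⊢
    have eA1 : ∑ x ∈ Finset.Ico 1 (m + 2),
        ((m:ℚ) + 2 - (x:ℚ)) * ((x:ℚ) * ((m:ℚ) + 2 - (x:ℚ) + 1) + (x:ℚ) * ((x:ℚ) - 1)) * ((2 * m + 4).choose x : ℚ)
        = ∑ x ∈ Finset.range (m + 2),
        ((m:ℚ) + 2 - (x:ℚ)) * ((x:ℚ) * ((m:ℚ) + 2 - (x:ℚ) + 1) + (x:ℚ) * ((x:ℚ) - 1)) * ((2 * m + 4).choose x : ℚ) := by
      rw [Finset.range_eq_Ico, Finset.sum_eq_sum_Ico_succ_bot (by omega : 0 < m + 2)]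
      norm_num
    rw [eA1] at hbal
    simp only [Finset.sum_Ico_eq_sum_range] at hbal
    simp only [show m + 2 - 1 = m + 1 from rfl, show m + 2 - 2 = m from rfl,
      Nat.add_sub_cancel_left] at hbal
    simp only [Finset.sum_range_succ] at hbal
    push_cast at hbal
    have hS := pas2 (2 * m + 4) m (fun k => ((m:ℚ) + 2 - (k:ℚ)) ^ 2)
    simp only [Finset.sum_range_succ] at hS
    push_cast at hS
    have hch := Nat.choose_succ_right_eq (2 * m + 4) (m + 1)
    rw [show 2 * m + 4 - (m + 1) = m + 3 from by omega] at hch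
    have hchq : ((2 * m + 4).choose (m + 2) : ℚ) * ((m:ℚ) + 2)
        = ((2 * m + 4).choose (m + 1) : ℚ) * ((m:ℚ) + 3) := by exact_mod_cast congrArg (Nat.cast : ℕ → ℚ) hch
    apply mul_left_cancel₀ (show ((m:ℚ) + 2) ≠ 0 from by positivity)
    simp only [Finset.sum_range_succ]
    push_cast
    have hmerge0 : ∑ x ∈ Finset.range m,
        (((m:ℚ)+2) * (((m:ℚ) + 2 - (x:ℚ)) ^ 2 * ((2 * m + 4).choose x : ℚ))
         + 2 * ((m:ℚ)+2) * (((m:ℚ) + 2 - ((x:ℚ) + 1)) ^ 2 * ((2 * m + 4).choose x : ℚ))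
         + ((m:ℚ)+2) * (((m:ℚ) + 2 - ((x:ℚ) + 2)) ^ 2 * ((2 * m + 4).choose x : ℚ))
         + ((m:ℚ) + 2 - (x:ℚ)) * ((x:ℚ) * ((m:ℚ) + 2 - (x:ℚ) + 1) + (x:ℚ) * ((x:ℚ) - 1)) * ((2 * m + 4).choose x : ℚ)
         + ((m:ℚ) + 2 - (1 + (x:ℚ))) * (2 * (1 + (x:ℚ) - 1) * ((m:ℚ) + 2 - (1 + (x:ℚ)))) * ((2 * m + 4).choose x : ℚ)
         + ((m:ℚ) + 2 - (2 + (x:ℚ))) * ((2 * ((m:ℚ) + 2) - (2 + (x:ℚ))) ^ 2 + (2 + (x:ℚ) - 2) * ((m:ℚ) + 2 - (2 + (x:ℚ)))) * ((2 * m + 4).choose x : ℚ)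
         - ((m:ℚ) + 2 - (1 + (x:ℚ))) * (2 * (2 * ((m:ℚ) + 2) - (1 + (x:ℚ))) * ((m:ℚ) + 2 - (1 + (x:ℚ)) + 1) + 2 * (2 * ((m:ℚ) + 2) - (1 + (x:ℚ))) * (1 + (x:ℚ) - 1) + 2 * (1 + (x:ℚ) - 1) * ((m:ℚ) + 2 - (1 + (x:ℚ)))) * ((2 * m + 4).choose x : ℚ)
         - ((m:ℚ) + 2 - (2 + (x:ℚ))) * (2 * (2 * ((m:ℚ) + 2) - (2 + (x:ℚ))) * ((m:ℚ) + 2 - (2 + (x:ℚ))) + 2 * (2 + (x:ℚ) - 2) * ((m:ℚ) + 2 - (2 + (x:ℚ))) + 2 * ((m:ℚ) + 2 - (2 + (x:ℚ)))) * ((2 * m + 4).choose x : ℚ)) = 0 := by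
      apply Finset.sum_eq_zero
      intro x hx
      ring
    simp only [Finset.sum_add_distrib, Finset.sum_sub_distrib, ← Finset.mul_sum] at hmerge0
    linear_combination hbal - ((m:ℚ) + 2) * hS - hmerge0 + ((m:ℚ) + 2) ^ 2 * hchq
end
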